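/- Let α and β be partitions with at most d parts and let □ = (ℓ)^d be a rectangular partition with d parts containing β (i.e., ℓ ≥ β_1). Then in the ring of symmetric polynomials in d variables t_1,…,t_d, the product of Schur polynomials satisfies s_α(t_1,…,t_d)·s_β(t_1,…,t_d) = s_{(□+α)/(□−β^←)}(t_1,…,t_d), where β^← = (β_d,…,β_1) is the reversal of β, □+α = (ℓ+α_1,…,ℓ+α_d), and □−β^← = (ℓ−β_d,…,ℓ−β_1). -/

import Mathlib

/-!
Cut the skew shape `(□ + α)/(□ − β^←)` along the vertical line after column `ℓ`. Every column of
the left block `□/(□ − β^←)` reaches the bottom row, so in a semistandard filling an entry in row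
`i` of that block is at most `i`, while the right block is the straight shape `α`, whose entries in
row `i` are at least `i`. Hence the two blocks are filled independently and
`s_{(□+α)/(□−β^←)} = s_α · s_{□/(□−β^←)}`. Rotating `□/(□ − β^←)` by 180° and replacing each entry
`v` by `d + 1 − v` turns it into `β` and reverses the variables; since skew Schur polynomials are
symmetric (Bender–Knuth involutions), `s_{□/(□−β^←)} = s_β`.
-/

open MvPolynomial

/-- The cells of the skew shape `lam/mu` with at most `d` rows (0-indexed). -/
def shapeCells (d : ℕ) (lam mu : Fin d → ℕ) : Finset (Fin d × ℕ) :=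
  (Finset.univ ×ˢ Finset.range (Finset.univ.sup lam)).filter
    (fun p => mu p.1 ≤ p.2 ∧ p.2 < lam p.1)

/-- Semistandardness of a filling of the cells of `lam/mu` with values in `Fin d`
(the value `v : Fin d` represents the entry `v+1 ∈ {1,…,d}`): rows weakly increase and
columns strictly increase. -/
def IsSSYT (d : ℕ) (lam mu : Fin d → ℕ) (T : shapeCells d lam mu → Fin d) : Prop :=
  (∀ c c' : shapeCells d lam mu, (c : Fin d × ℕ).1 = (c' : Fin d × ℕ).1 →
      (c : Fin d × ℕ).2 ≤ (c' : Fin d × ℕ).2 → T c ≤ T c') ∧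
  (∀ c c' : shapeCells d lam mu, ((c' : Fin d × ℕ).1 : ℕ) = ((c : Fin d × ℕ).1 : ℕ) + 1 →
      (c : Fin d × ℕ).2 = (c' : Fin d × ℕ).2 → T c < T c')

open scoped Classical in
/-- The skew Schur polynomial `s_{lam/mu}(t_0,…,t_{d-1})`, as the generating polynomial of
semistandard skew tableaux of shape `lam/mu` with entries in `{1,…,d}`. -/
noncomputable def skewSchur (d : ℕ) (lam mu : Fin d → ℕ) : MvPolynomial (Fin d) ℤ :=
  ∑ T ∈ Finset.univ.filter (IsSSYT d lam mu), ∏ c : shapeCells d lam mu, X (T c)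

/-- The number of entries of the tableau `T` equal to `v`. -/
noncomputable def entryCount (d : ℕ) (lam mu : Fin d → ℕ)
    (T : shapeCells d lam mu → Fin d) (v : Fin d) : ℕ :=
  (Finset.univ.filter (fun c : shapeCells d lam mu => T c = v)).card

open Finset

section Cells

variable {d : ℕ} {lam mu : Fin d → ℕ}

theorem mem_shapeCells {p : Fin d × ℕ} :
    p ∈ shapeCells d lam mu ↔ mu p.1 ≤ p.2 ∧ p.2 < lam p.1 := by
  simp only [shapeCells, mem_filter, mem_product, mem_univ, mem_range, true_and,
    and_iff_right_iff_imp]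
  exact fun h => h.2.trans_le (le_sup (mem_univ p.1))

theorem card_row_Ico {i : Fin d} {a b : ℕ} (ha : mu i ≤ a) (hb : b ≤ lam i) :
    #{c : shapeCells d lam mu | (c.1.1 : ℕ) = i ∧ a ≤ c.1.2 ∧ c.1.2 < b} = b - a := by
  rw [← Nat.card_Ico a b]
  refine card_bij' (fun c _ => c.1.2) (fun j hj => ⟨(i, j), mem_shapeCells.2 ?_⟩)
    (fun c hc => ?_) (fun j hj => ?_) (fun c hc => ?_) fun _ _ => rfl
  · rw [Finset.mem_Ico] at hj
    exact ⟨ha.trans hj.1, hj.2.trans_le hb⟩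
  · simp only [mem_filter, mem_univ, true_and] at hc
    exact Finset.mem_Ico.2 hc.2
  · simpa using Finset.mem_Ico.1 hj
  · simp only [mem_filter, mem_univ, true_and] at hc
    exact Subtype.ext (Prod.ext (Fin.ext hc.1.symm) rfl)

theorem IsSSYT.add_le_of_col {T : shapeCells d lam mu → Fin d} (hT : IsSSYT d lam mu T)
    (hlam : Antitone lam) (hmu : Antitone mu) {c c' : shapeCells d lam mu}
    (hcol : c.1.2 = c'.1.2) (hrow : c.1.1 ≤ c'.1.1) :
    (T c : ℕ) + (c'.1.1 - c.1.1) ≤ T c' := by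
  suffices h : ∀ (n : ℕ) (c' : shapeCells d lam mu), (c'.1.1 : ℕ) = c.1.1 + n →
      c.1.2 = c'.1.2 → (T c : ℕ) + n ≤ T c' by
    exact h _ c' (by rw [Fin.le_def] at hrow; omega) hcol
  have hc := mem_shapeCells.1 c.2
  intro n
  induction n with
  | zero =>
    intro c' hrow hcol
    obtain rfl : c = c' := Subtype.ext (Prod.ext (Fin.ext hrow.symm) hcol)
    simp
  | succ n ih =>
    intro c' hrow hcol
    have hc' := mem_shapeCells.1 c'.2
    have hlt : (c.1.1 : ℕ) + n < d := by have := c'.1.1.isLt; omega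
    have hm : ((⟨c.1.1 + n, hlt⟩ : Fin d), c.1.2) ∈ shapeCells d lam mu := by
      refine mem_shapeCells.2 ⟨(hmu (Fin.le_def.2 (Nat.le_add_right _ _))).trans hc.1, ?_⟩
      dsimp only
      rw [hcol]
      exact hc'.2.trans_le (hlam (Fin.le_def.2 (show (c.1.1 : ℕ) + n ≤ c'.1.1 by omega)))
    have h1 := ih ⟨_, hm⟩ rfl rfl
    have h2 : T ⟨_, hm⟩ < T c' := hT.2 _ c' (show (c'.1.1 : ℕ) = c.1.1 + n + 1 by omega) hcol
    rw [Fin.lt_def] at h2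
    omega

theorem IsSSYT.row_le_apply {T : shapeCells d lam 0 → Fin d} (hT : IsSSYT d lam 0 T)
    (hlam : Antitone lam) (c : shapeCells d lam 0) : (c.1.1 : ℕ) ≤ T c := by
  have hc := mem_shapeCells.1 c.2
  have h0 : (⟨0, c.1.1.pos⟩ : Fin d) ≤ c.1.1 := Fin.le_def.2 (Nat.zero_le _)
  have htop : ((⟨0, c.1.1.pos⟩ : Fin d), c.1.2) ∈ shapeCells d lam 0 :=
    mem_shapeCells.2 ⟨Nat.zero_le _, hc.2.trans_le (hlam h0)⟩
  exact (Nat.le_add_left _ _).trans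
    (hT.add_le_of_col hlam (fun _ _ _ => le_rfl) (c := ⟨_, htop⟩) (c' := c) rfl h0)

theorem IsSSYT.apply_le_row {ℓ : ℕ} {ν : Fin d → ℕ} {T : shapeCells d (fun _ => ℓ) ν → Fin d}
    (hT : IsSSYT d (fun _ => ℓ) ν T) (hν : Antitone ν) (c : shapeCells d (fun _ => ℓ) ν) :
    (T c : ℕ) ≤ c.1.1 := by
  have hc := mem_shapeCells.1 c.2
  have hd := c.1.1.isLt
  have hlast : c.1.1 ≤ ⟨d - 1, by omega⟩ := Fin.le_def.2 (by simp; omega)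
  have hbot : ((⟨d - 1, by omega⟩ : Fin d), c.1.2) ∈ shapeCells d (fun _ => ℓ) ν :=
    mem_shapeCells.2 ⟨(hν hlast).trans hc.1, hc.2⟩
  have hchain := hT.add_le_of_col (fun _ _ _ => le_rfl) hν (c := c) (c' := ⟨_, hbot⟩) rfl hlast
  have := (T ⟨_, hbot⟩).isLt
  dsimp only at hchain
  omega

end Cells

section GelfandTsetlin

variable {d : ℕ} {lam mu : Fin d → ℕ} {T : shapeCells d lam mu → Fin d}

/-- The length of row `i` of the shape `λ⁽ᵛ⁾ ⊇ μ` filled by the entries `< v` of `T`, so that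
`v ↦ shapeLT T v` is the Gelfand–Tsetlin pattern of `T`. Rows `i ≥ d` have length `0`. -/
noncomputable def shapeLT (T : shapeCells d lam mu → Fin d) (v i : ℕ) : ℕ :=
  (if h : i < d then mu ⟨i, h⟩ else 0) +
    #{c : shapeCells d lam mu | (c.1.1 : ℕ) = i ∧ (T c : ℕ) < v}

theorem le_shapeLT (v : ℕ) (i : Fin d) : mu i ≤ shapeLT T v i := by
  simp [shapeLT]

theorem shapeLT_mono {v w : ℕ} (h : v ≤ w) (i : ℕ) : shapeLT T v i ≤ shapeLT T w i := by
  unfold shapeLT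
  gcongr

theorem shapeLT_of_le (v : ℕ) {i : ℕ} (hi : d ≤ i) : shapeLT T v i = 0 := by
  simp only [shapeLT, dif_neg (not_lt.2 hi), zero_add, card_eq_zero, filter_eq_empty_iff]
  exact fun c _ h => absurd c.1.1.isLt (by omega)

theorem shapeLT_le (hml : mu ≤ lam) (v : ℕ) (i : Fin d) : shapeLT T v i ≤ lam i := by
  have hcard : #{c : shapeCells d lam mu | (c.1.1 : ℕ) = i ∧ (T c : ℕ) < v} ≤
      #{c : shapeCells d lam mu | (c.1.1 : ℕ) = i ∧ mu i ≤ c.1.2 ∧ c.1.2 < lam i} := by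
    refine card_le_card (monotone_filter_right _ fun c _ hc => ?_)
    obtain rfl : c.1.1 = i := Fin.ext hc.1
    exact ⟨hc.1, mem_shapeCells.1 c.2⟩
  rw [card_row_Ico le_rfl le_rfl] at hcard
  have : mu i ≤ lam i := hml i
  simp only [shapeLT, dif_pos i.isLt, Fin.eta]
  omega

theorem shapeLT_eq_of_lt_iff {v b : ℕ} (i : Fin d) (hb : mu i ≤ b) (hbl : b ≤ lam i)
    (h : ∀ c : shapeCells d lam mu, c.1.1 = i → ((T c : ℕ) < v ↔ c.1.2 < b)) :
    shapeLT T v i = b := by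
  have hrow : ∀ c : shapeCells d lam mu, ((c.1.1 : ℕ) = i ∧ (T c : ℕ) < v) ↔
      ((c.1.1 : ℕ) = i ∧ mu i ≤ c.1.2 ∧ c.1.2 < b) := by
    intro c
    refine ⟨fun ⟨hi, hv⟩ => ?_, fun ⟨hi, _, hcb⟩ => ⟨hi, (h c (Fin.ext hi)).2 hcb⟩⟩
    obtain rfl : c.1.1 = i := Fin.ext hi
    exact ⟨hi, (mem_shapeCells.1 c.2).1, (h c rfl).1 hv⟩
  simp only [shapeLT, dif_pos i.isLt, Fin.eta]
  rw [filter_congr fun c _ => hrow c, card_row_Ico le_rfl hbl]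
  omega

theorem IsSSYT.lt_iff_lt_shapeLT (hT : IsSSYT d lam mu T) (c : shapeCells d lam mu) (v : ℕ) :
    (T c : ℕ) < v ↔ c.1.2 < shapeLT T v c.1.1 := by
  have hc := mem_shapeCells.1 c.2
  simp only [shapeLT, dif_pos c.1.1.isLt, Fin.eta]
  constructor
  · intro hv
    have hcard :
        #{x : shapeCells d lam mu | (x.1.1 : ℕ) = c.1.1 ∧ mu c.1.1 ≤ x.1.2 ∧ x.1.2 < c.1.2 + 1} ≤
          #{x : shapeCells d lam mu | (x.1.1 : ℕ) = c.1.1 ∧ (T x : ℕ) < v} :=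
      card_le_card (monotone_filter_right _ fun x _ hx =>
        ⟨hx.1, lt_of_le_of_lt (hT.1 x c (Fin.ext hx.1) (by omega)) hv⟩)
    rw [card_row_Ico le_rfl (by omega)] at hcard
    omega
  · intro hlt
    by_contra hv
    have hcard :
        #{x : shapeCells d lam mu | (x.1.1 : ℕ) = c.1.1 ∧ (T x : ℕ) < v} ≤
          #{x : shapeCells d lam mu | (x.1.1 : ℕ) = c.1.1 ∧ mu c.1.1 ≤ x.1.2 ∧ x.1.2 < c.1.2} := by
      refine card_le_card (monotone_filter_right _ fun x _ hx => ?_)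
      have hrow : x.1.1 = c.1.1 := Fin.ext hx.1
      refine ⟨hx.1, hrow ▸ (mem_shapeCells.1 x.2).1, not_le.1 fun hcol => hv ?_⟩
      exact lt_of_le_of_lt (hT.1 c x hrow.symm hcol) hx.2
    rw [card_row_Ico le_rfl hc.2.le] at hcard
    omega

theorem IsSSYT.shapeLT_succ_le (hT : IsSSYT d lam mu T) (hlam : Antitone lam)
    (hmu : Antitone mu) (hml : mu ≤ lam) (v i : ℕ) :
    shapeLT T (v + 1) (i + 1) ≤ shapeLT T v i := by
  by_cases hi : i + 1 < d
  swap
  · rw [shapeLT_of_le _ (not_lt.1 hi)]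
    exact Nat.zero_le _
  by_contra! hcon
  let r : Fin d := ⟨i, by omega⟩
  let r' : Fin d := ⟨i + 1, hi⟩
  have hrr' : r ≤ r' := Fin.le_def.2 (Nat.le_succ i)
  have hmuj : mu r ≤ shapeLT T v i := le_shapeLT v r
  have hjlam : shapeLT T v i < lam r' := hcon.trans_le (shapeLT_le hml (v + 1) r')
  let c : shapeCells d lam mu :=
    ⟨(r, shapeLT T v i), mem_shapeCells.2 ⟨hmuj, hjlam.trans_le (hlam hrr')⟩⟩
  let c' : shapeCells d lam mu :=
    ⟨(r', shapeLT T v i), mem_shapeCells.2 ⟨(hmu hrr').trans hmuj, hjlam⟩⟩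
  have h1 : ¬ (T c : ℕ) < v := by
    rw [hT.lt_iff_lt_shapeLT]
    exact lt_irrefl _
  have h2 : (T c' : ℕ) < v + 1 := (hT.lt_iff_lt_shapeLT c' _).2 hcon
  have h3 := Fin.lt_def.1 (hT.2 c c' rfl rfl)
  omega

theorem isSSYT_of_lt_iff (f : ℕ → ℕ → ℕ)
    (h : ∀ (c : shapeCells d lam mu) (v : ℕ), (T c : ℕ) < v ↔ c.1.2 < f v c.1.1)
    (hf : ∀ v i, i + 1 < d → f (v + 1) (i + 1) ≤ f v i) : IsSSYT d lam mu T := by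
  refine ⟨fun c c' hrow hcol => ?_, fun c c' hrow hcol => ?_⟩
  · by_contra! hlt
    have := (h c' (T c)).1 hlt
    rw [← hrow] at this
    exact lt_irrefl (T c : ℕ) ((h c (T c)).2 (by omega))
  · by_contra! hle
    have h1 := (h c' (T c' + 1)).1 (Nat.lt_succ_self _)
    rw [hrow, ← hcol] at h1
    have h2 := (h c (T c')).2 (h1.trans_le (hf _ _ (hrow ▸ c'.1.1.isLt)))
    rw [Fin.le_def] at hle
    omega

theorem card_row_eq_shapeLT_sub (w : ℕ) (i : Fin d) :
    #{c : shapeCells d lam mu | (c.1.1 : ℕ) = i ∧ (T c : ℕ) = w}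
      = shapeLT T (w + 1) i - shapeLT T w i := by
  have hsplit : #{c : shapeCells d lam mu | (c.1.1 : ℕ) = i ∧ (T c : ℕ) < w + 1} =
      #{c : shapeCells d lam mu | (c.1.1 : ℕ) = i ∧ (T c : ℕ) < w} +
        #{c : shapeCells d lam mu | (c.1.1 : ℕ) = i ∧ (T c : ℕ) = w} := by
    rw [← card_union_of_disjoint (disjoint_filter.2 fun c _ h1 h2 => by omega), ← filter_or]
    congr 1
    ext c
    simp only [mem_filter, mem_univ, true_and]
    omega
  simp only [shapeLT, dif_pos i.isLt, hsplit]
  omega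

theorem entryCount_eq_sum_shapeLT (v : Fin d) :
    entryCount d lam mu T v = ∑ i ∈ range d, (shapeLT T (v + 1) i - shapeLT T v i) := by
  rw [← Fin.sum_univ_eq_sum_range (fun i => shapeLT T (v + 1) i - shapeLT T v i), entryCount,
    card_eq_sum_card_fiberwise (f := fun c => c.1.1) (t := univ) fun _ _ => mem_coe.2 (mem_univ _)]
  refine sum_congr rfl fun i _ => ?_
  rw [filter_filter, ← card_row_eq_shapeLT_sub]
  congr 1
  ext c
  simp only [mem_filter, mem_univ, true_and, Fin.val_inj]
  exact and_comm

theorem prod_X_eq_prod_pow_entryCount (T : shapeCells d lam mu → Fin d) :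
    ∏ c, (X (T c) : MvPolynomial (Fin d) ℤ) = ∏ v, X v ^ entryCount d lam mu T v := by
  rw [← prod_fiberwise univ T]
  refine prod_congr rfl fun v _ => ?_
  rw [prod_congr rfl fun c hc => by rw [(mem_filter.1 hc).2], prod_const, entryCount]

theorem entryCount_perm (σ : Equiv.Perm (Fin d)) (T : shapeCells d lam mu → Fin d) (v : Fin d) :
    entryCount d lam mu (fun c => σ (T c)) v = entryCount d lam mu T (σ.symm v) := by
  simp only [entryCount, Equiv.eq_symm_apply]

end GelfandTsetlin

section BenderKnuth

variable {d : ℕ} {lam mu : Fin d → ℕ} {T : shapeCells d lam mu → Fin d} {k : ℕ}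

/-! The Bender–Knuth involution `bk` exchanging `k` and `k + 1`. In row `i`, the entries `k`,
`k + 1` in the columns `[bkLo T k i, bkHi T k i)` have no `k` or `k + 1` directly above or below
them; `bk` moves the split point `shapeLT T (k + 1) i` between these `k`s and `(k + 1)`s to its
mirror image `bkSplit T k i` in that interval, which exchanges their numbers. -/

noncomputable def bkLo (T : shapeCells d lam mu → Fin d) (k i : ℕ) : ℕ :=
  max (shapeLT T k i) (shapeLT T (k + 2) (i + 1))

noncomputable def bkHi (T : shapeCells d lam mu → Fin d) (k : ℕ) : ℕ → ℕ
  | 0 => shapeLT T (k + 2) 0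
  | i + 1 => min (shapeLT T (k + 2) (i + 1)) (shapeLT T k i)

noncomputable def bkSplit (T : shapeCells d lam mu → Fin d) (k i : ℕ) : ℕ :=
  bkLo T k i + bkHi T k i - shapeLT T (k + 1) i

noncomputable def bkShape (T : shapeCells d lam mu → Fin d) (k v i : ℕ) : ℕ :=
  if v = k + 1 then bkSplit T k i else shapeLT T v i

noncomputable def bk (hk : k + 1 < d) (T : shapeCells d lam mu → Fin d) :
    shapeCells d lam mu → Fin d := fun c =>
  if (T c : ℕ) = k ∨ (T c : ℕ) = k + 1 then
    if c.1.2 < bkSplit T k c.1.1 then ⟨k, by omega⟩ else ⟨k + 1, hk⟩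
  else T c

theorem bkHi_le (T : shapeCells d lam mu → Fin d) (k i : ℕ) :
    bkHi T k i ≤ shapeLT T (k + 2) i := by
  cases i <;> simp [bkHi]

theorem IsSSYT.bkLo_le (hT : IsSSYT d lam mu T) (hlam : Antitone lam) (hmu : Antitone mu)
    (hml : mu ≤ lam) (i : ℕ) : bkLo T k i ≤ shapeLT T (k + 1) i :=
  max_le (shapeLT_mono (Nat.le_succ k) i) (hT.shapeLT_succ_le hlam hmu hml (k + 1) i)

theorem IsSSYT.le_bkHi (hT : IsSSYT d lam mu T) (hlam : Antitone lam) (hmu : Antitone mu)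
    (hml : mu ≤ lam) (i : ℕ) : shapeLT T (k + 1) i ≤ bkHi T k i := by
  cases i with
  | zero => exact shapeLT_mono (Nat.le_succ _) 0
  | succ i => exact le_min (shapeLT_mono (Nat.le_succ _) _) (hT.shapeLT_succ_le hlam hmu hml k i)

theorem IsSSYT.shapeLT_le_bkSplit (hT : IsSSYT d lam mu T) (hlam : Antitone lam)
    (hmu : Antitone mu) (hml : mu ≤ lam) (i : ℕ) : shapeLT T k i ≤ bkSplit T k i := by
  have := hT.le_bkHi hlam hmu hml (k := k) i
  have : shapeLT T k i ≤ bkLo T k i := le_max_left _ _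
  unfold bkSplit
  omega

theorem IsSSYT.bkSplit_le_shapeLT (hT : IsSSYT d lam mu T) (hlam : Antitone lam)
    (hmu : Antitone mu) (hml : mu ≤ lam) (i : ℕ) : bkSplit T k i ≤ shapeLT T (k + 2) i := by
  have := hT.bkLo_le hlam hmu hml (k := k) i
  have := bkHi_le T k i
  unfold bkSplit
  omega

theorem val_bk (hk : k + 1 < d) (c : shapeCells d lam mu) :
    (bk hk T c : ℕ) = if (T c : ℕ) = k ∨ (T c : ℕ) = k + 1 then
      if c.1.2 < bkSplit T k c.1.1 then k else k + 1 else T c := by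
  unfold bk
  split_ifs <;> rfl

theorem IsSSYT.bk_lt_iff (hT : IsSSYT d lam mu T) (hlam : Antitone lam) (hmu : Antitone mu)
    (hml : mu ≤ lam) (hk : k + 1 < d) (c : shapeCells d lam mu) (v : ℕ) :
    (bk hk T c : ℕ) < v ↔ c.1.2 < bkShape T k v c.1.1 := by
  have := hT.lt_iff_lt_shapeLT c k
  have := hT.lt_iff_lt_shapeLT c (k + 1)
  have := hT.lt_iff_lt_shapeLT c (k + 2)
  have := hT.lt_iff_lt_shapeLT c v
  have := hT.shapeLT_le_bkSplit hlam hmu hml (k := k) c.1.1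
  have := hT.bkSplit_le_shapeLT hlam hmu hml (k := k) c.1.1
  have hv : v ≤ k ∨ v = k + 1 ∨ k + 2 ≤ v := by omega
  rw [val_bk, bkShape]
  rcases hv with hv | rfl | hv
  · have := shapeLT_mono (T := T) hv c.1.1
    rw [if_neg (show v ≠ k + 1 by omega)]
    split_ifs <;> omega
  · rw [if_pos rfl]
    split_ifs <;> omega
  · have := shapeLT_mono (T := T) hv c.1.1
    rw [if_neg (show v ≠ k + 1 by omega)]
    split_ifs <;> omega

theorem IsSSYT.bkShape_succ_le (hT : IsSSYT d lam mu T) (hlam : Antitone lam) (hmu : Antitone mu)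
    (hml : mu ≤ lam) (v i : ℕ) : bkShape T k (v + 1) (i + 1) ≤ bkShape T k v i := by
  have := hT.bkLo_le hlam hmu hml (k := k) (i + 1)
  have := hT.le_bkHi hlam hmu hml (k := k) i
  have : bkHi T k (i + 1) ≤ shapeLT T k i := min_le_right _ _
  have : shapeLT T (k + 2) (i + 1) ≤ bkLo T k i := le_max_right _ _
  unfold bkShape bkSplit
  rcases (by omega : v = k ∨ v = k + 1 ∨ (v ≠ k ∧ v ≠ k + 1)) with rfl | rfl | ⟨hv, hv'⟩
  · rw [if_pos rfl, if_neg (by omega)]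
    omega
  · rw [if_neg (by omega), if_pos rfl, show k + 1 + 1 = k + 2 from rfl]
    omega
  · rw [if_neg (by omega), if_neg hv']
    exact hT.shapeLT_succ_le hlam hmu hml v i

theorem IsSSYT.isSSYT_bk (hT : IsSSYT d lam mu T) (hlam : Antitone lam) (hmu : Antitone mu)
    (hml : mu ≤ lam) (hk : k + 1 < d) : IsSSYT d lam mu (bk hk T) :=
  isSSYT_of_lt_iff (bkShape T k) (hT.bk_lt_iff hlam hmu hml hk)
    fun v i _ => hT.bkShape_succ_le hlam hmu hml v i

theorem IsSSYT.shapeLT_bk (hT : IsSSYT d lam mu T) (hlam : Antitone lam) (hmu : Antitone mu)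
    (hml : mu ≤ lam) (hk : k + 1 < d) (v : ℕ) (i : Fin d) :
    shapeLT (bk hk T) v i = bkShape T k v i := by
  have := hT.shapeLT_le_bkSplit hlam hmu hml (k := k) i
  have := hT.bkSplit_le_shapeLT hlam hmu hml (k := k) i
  have := le_shapeLT (T := T) k i
  have := le_shapeLT (T := T) v i
  have := shapeLT_le (T := T) hml (k + 2) i
  have := shapeLT_le (T := T) hml v i
  refine shapeLT_eq_of_lt_iff i ?_ ?_ fun c hc => ?_
  · unfold bkShape
    split_ifs <;> omega
  · unfold bkShape
    split_ifs <;> omega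
  · rw [← hc]
    exact hT.bk_lt_iff hlam hmu hml hk c v

theorem IsSSYT.shapeLT_bk_of_ne (hT : IsSSYT d lam mu T) (hlam : Antitone lam)
    (hmu : Antitone mu) (hml : mu ≤ lam) (hk : k + 1 < d) {v : ℕ} (hv : v ≠ k + 1) (i : ℕ) :
    shapeLT (bk hk T) v i = shapeLT T v i := by
  by_cases hi : i < d
  · simpa [bkShape, hv] using hT.shapeLT_bk hlam hmu hml hk v ⟨i, hi⟩
  · rw [shapeLT_of_le _ (not_lt.1 hi), shapeLT_of_le _ (not_lt.1 hi)]

theorem IsSSYT.bkSplit_bk (hT : IsSSYT d lam mu T) (hlam : Antitone lam) (hmu : Antitone mu)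
    (hml : mu ≤ lam) (hk : k + 1 < d) (i : Fin d) :
    bkSplit (bk hk T) k i = shapeLT T (k + 1) i := by
  have hk0 := hT.shapeLT_bk_of_ne hlam hmu hml hk (v := k) (by omega)
  have hk2 := hT.shapeLT_bk_of_ne hlam hmu hml hk (v := k + 2) (by omega)
  have hHi : bkHi (bk hk T) k i = bkHi T k i := by
    cases (i : ℕ) <;> simp only [bkHi, hk0, hk2]
  have := hT.bkLo_le hlam hmu hml (k := k) i
  have := hT.le_bkHi hlam hmu hml (k := k) i
  unfold bkSplit bkLo at *
  rw [hHi, hk0, hk2, hT.shapeLT_bk hlam hmu hml hk, bkShape, if_pos rfl, bkSplit, bkLo]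
  omega

theorem IsSSYT.bk_bk (hT : IsSSYT d lam mu T) (hlam : Antitone lam) (hmu : Antitone mu)
    (hml : mu ≤ lam) (hk : k + 1 < d) : bk hk (bk hk T) = T := by
  funext c
  refine Fin.ext (eq_of_forall_gt_iff fun v => ?_)
  rw [(hT.isSSYT_bk hlam hmu hml hk).bk_lt_iff hlam hmu hml hk, hT.lt_iff_lt_shapeLT, bkShape]
  split_ifs with hv
  · rw [hv, hT.bkSplit_bk hlam hmu hml hk]
  · rw [hT.shapeLT_bk_of_ne hlam hmu hml hk hv]

theorem IsSSYT.sum_bkSplit_sub (hT : IsSSYT d lam mu T) (hlam : Antitone lam)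
    (hmu : Antitone mu) (hml : mu ≤ lam) :
    ∑ i ∈ range d, (bkSplit T k i - shapeLT T k i)
      = ∑ i ∈ range d, (shapeLT T (k + 2) i - shapeLT T (k + 1) i) := by
  have hlo := hT.bkLo_le hlam hmu hml (k := k)
  have hhi := hT.le_bkHi hlam hmu hml (k := k)
  have hL : ∀ i, bkSplit T k i - shapeLT T k i =
      (bkLo T k i - shapeLT T k i) + (bkHi T k i - shapeLT T (k + 1) i) := fun i => by
    have := hlo i
    have := hhi i
    have : shapeLT T k i ≤ bkLo T k i := le_max_left _ _
    unfold bkSplit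
    omega
  have hR : ∀ i, shapeLT T (k + 2) i - shapeLT T (k + 1) i =
      (shapeLT T (k + 2) i - bkHi T k i) + (bkHi T k i - shapeLT T (k + 1) i) := fun i => by
    have := hhi i
    have := bkHi_le T k i
    omega
  have hshift : ∀ i, bkLo T k i - shapeLT T k i = shapeLT T (k + 2) (i + 1) - bkHi T k (i + 1) :=
    fun i => by simp only [bkLo, bkHi]; omega
  rw [sum_congr rfl fun i _ => hL i, sum_congr rfl fun i _ => hR i, sum_add_distrib,
    sum_add_distrib, sum_congr rfl fun i _ => hshift i]
  congr 1
  have h0 : shapeLT T (k + 2) 0 - bkHi T k 0 = 0 := Nat.sub_self _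
  have hd : shapeLT T (k + 2) d - bkHi T k d = 0 := by
    rw [shapeLT_of_le _ le_rfl, Nat.zero_sub]
  have := sum_range_succ' (fun i => shapeLT T (k + 2) i - bkHi T k i) d
  have := sum_range_succ (fun i => shapeLT T (k + 2) i - bkHi T k i) d
  omega

theorem IsSSYT.entryCount_bk_left (hT : IsSSYT d lam mu T) (hlam : Antitone lam)
    (hmu : Antitone mu) (hml : mu ≤ lam) (hk : k + 1 < d) :
    entryCount d lam mu (bk hk T) ⟨k, by omega⟩ = entryCount d lam mu T ⟨k + 1, hk⟩ := by
  rw [entryCount_eq_sum_shapeLT, entryCount_eq_sum_shapeLT, ← hT.sum_bkSplit_sub hlam hmu hml]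
  refine sum_congr rfl fun i hi => ?_
  rw [hT.shapeLT_bk_of_ne hlam hmu hml hk (v := k) (by omega),
    hT.shapeLT_bk hlam hmu hml hk (k + 1) ⟨i, mem_range.1 hi⟩, bkShape, if_pos rfl]

theorem IsSSYT.entryCount_bk (hT : IsSSYT d lam mu T) (hlam : Antitone lam) (hmu : Antitone mu)
    (hml : mu ≤ lam) (hk : k + 1 < d) (v : Fin d) :
    entryCount d lam mu (bk hk T) v
      = entryCount d lam mu T (Equiv.swap ⟨k, by omega⟩ ⟨k + 1, hk⟩ v) := by
  rcases eq_or_ne v ⟨k, by omega⟩ with rfl | hv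
  · rw [Equiv.swap_apply_left, hT.entryCount_bk_left hlam hmu hml hk]
  rcases eq_or_ne v ⟨k + 1, hk⟩ with rfl | hv'
  · rw [Equiv.swap_apply_right,
      ← (hT.isSSYT_bk hlam hmu hml hk).entryCount_bk_left hlam hmu hml hk, hT.bk_bk hlam hmu hml hk]
  rw [Equiv.swap_apply_of_ne_of_ne hv hv', entryCount_eq_sum_shapeLT, entryCount_eq_sum_shapeLT]
  simp only [hT.shapeLT_bk_of_ne hlam hmu hml hk (v := v) fun h => hv' (Fin.ext h),
    hT.shapeLT_bk_of_ne hlam hmu hml hk (v := v + 1) fun h => hv (Fin.ext (by simpa using h))]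

theorem rename_swap_skewSchur (hlam : Antitone lam) (hmu : Antitone mu) (hml : mu ≤ lam)
    (hk : k + 1 < d) :
    rename (Equiv.swap (⟨k, by omega⟩ : Fin d) ⟨k + 1, hk⟩) (skewSchur d lam mu)
      = skewSchur d lam mu := by
  unfold skewSchur
  rw [map_sum]
  refine sum_nbij' (bk hk) (bk hk) ?_ ?_ ?_ ?_ ?_ <;>
    simp only [mem_filter, mem_univ, true_and]
  · exact fun T hT => hT.isSSYT_bk hlam hmu hml hk
  · exact fun T hT => hT.isSSYT_bk hlam hmu hml hk
  · exact fun T hT => hT.bk_bk hlam hmu hml hk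
  · exact fun T hT => hT.bk_bk hlam hmu hml hk
  · intro T hT
    rw [map_prod]
    simp only [rename_X]
    rw [prod_X_eq_prod_pow_entryCount (fun c => Equiv.swap _ _ (T c)),
      prod_X_eq_prod_pow_entryCount (bk hk T)]
    refine prod_congr rfl fun v _ => ?_
    rw [entryCount_perm, Equiv.symm_swap, hT.entryCount_bk hlam hmu hml hk]

theorem skewSchur_isSymmetric (hlam : Antitone lam) (hmu : Antitone mu) (hml : mu ≤ lam) :
    (skewSchur d lam mu).IsSymmetric := by
  intro σ
  cases d with
  | zero => rw [Subsingleton.elim σ 1, Equiv.Perm.coe_one, rename_id_apply]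
  | succ n =>
    have hσ : σ ∈ Submonoid.closure (Set.range fun i : Fin n => Equiv.swap i.castSucc i.succ) := by
      rw [Equiv.Perm.mclosure_swap_castSucc_succ]
      trivial
    induction hσ using Submonoid.closure_induction with
    | mem τ hτ =>
      obtain ⟨i, rfl⟩ := hτ
      exact rename_swap_skewSchur hlam hmu hml (k := i) (by omega)
    | one => rw [Equiv.Perm.coe_one, rename_id_apply]
    | mul σ τ _ _ hσ hτ => rw [Equiv.Perm.coe_mul, ← rename_rename, hτ, hσ]

end BenderKnuth

section Rotation

variable {d ℓ : ℕ} {lam mu : Fin d → ℕ}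

def rotateCell (ℓ : ℕ) (p : Fin d × ℕ) : Fin d × ℕ := (p.1.rev, ℓ - 1 - p.2)

theorem rotateCell_rotateCell {p : Fin d × ℕ} (hp : p.2 < ℓ) :
    rotateCell ℓ (rotateCell ℓ p) = p :=
  Prod.ext (Fin.rev_rev _) (by simp only [rotateCell]; omega)

theorem rotateCell_mem (hlam : ∀ i, lam i ≤ ℓ) {p : Fin d × ℕ} (hp : p ∈ shapeCells d lam mu) :
    rotateCell ℓ p ∈ shapeCells d (fun i => ℓ - mu i.rev) (fun i => ℓ - lam i.rev) := by
  have := mem_shapeCells.1 hp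
  have := hlam p.1
  simp only [mem_shapeCells, rotateCell, Fin.rev_rev]
  omega

theorem rotateCell_mem_of_mem_rotated {p : Fin d × ℕ}
    (hp : p ∈ shapeCells d (fun i => ℓ - mu i.rev) (fun i => ℓ - lam i.rev)) :
    rotateCell ℓ p ∈ shapeCells d lam mu := by
  have := mem_shapeCells.1 hp
  simp only [mem_shapeCells, rotateCell] at *
  omega

def rotateCells (hlam : ∀ i, lam i ≤ ℓ) :
    shapeCells d lam mu ≃ shapeCells d (fun i => ℓ - mu i.rev) (fun i => ℓ - lam i.rev) where
  toFun c := ⟨rotateCell ℓ c.1, rotateCell_mem hlam c.2⟩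
  invFun c := ⟨rotateCell ℓ c.1, rotateCell_mem_of_mem_rotated c.2⟩
  left_inv c := Subtype.ext (rotateCell_rotateCell ((mem_shapeCells.1 c.2).2.trans_le (hlam _)))
  right_inv c := Subtype.ext (rotateCell_rotateCell (by have := mem_shapeCells.1 c.2; omega))

theorem IsSSYT.rev_comp_rotate {lam' mu' : Fin d → ℕ} {T : shapeCells d lam mu → Fin d}
    (hT : IsSSYT d lam mu T) (g : shapeCells d lam' mu' → shapeCells d lam mu)
    (hg : ∀ c, (g c).1 = rotateCell ℓ c.1) : IsSSYT d lam' mu' fun c => (T (g c)).rev := by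
  refine ⟨fun c c' hrow hcol => Fin.rev_le_rev.2 ?_, fun c c' hrow hcol => Fin.rev_lt_rev.2 ?_⟩
  · apply hT.1 <;> simp only [hg, rotateCell, hrow]
    omega
  · have := c'.1.1.isLt
    apply hT.2 <;> simp only [hg, rotateCell, Fin.val_rev, hcol]
    omega

theorem skewSchur_rotate (hlam : ∀ i, lam i ≤ ℓ) :
    skewSchur d (fun i => ℓ - mu i.rev) (fun i => ℓ - lam i.rev)
      = rename Fin.rev (skewSchur d lam mu) := by
  set e := rotateCells (mu := mu) hlam
  unfold skewSchur
  rw [map_sum]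
  symm
  refine sum_equiv (e.arrowCongr Fin.revPerm) (fun T => ?_) fun T _ => ?_
  · simp only [mem_filter, mem_univ, true_and]
    refine ⟨fun hT => hT.rev_comp_rotate e.symm fun _ => rfl, fun hT => ?_⟩
    simpa using hT.rev_comp_rotate e fun _ => rfl
  · rw [map_prod]
    simp only [rename_X]
    exact Fintype.prod_equiv e _ _ fun c => by simp

end Rotation

section Split

variable {d ℓ : ℕ} {α ν : Fin d → ℕ}

theorem mem_split_left {p : Fin d × ℕ} (hp : p ∈ shapeCells d (fun i => ℓ + α i) ν)
    (h : ℓ ≤ p.2) : (p.1, p.2 - ℓ) ∈ shapeCells d α 0 := by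
  have := mem_shapeCells.1 hp
  simp only [mem_shapeCells, Pi.zero_apply] at *
  omega

theorem mem_split_right {p : Fin d × ℕ} (hp : p ∈ shapeCells d (fun i => ℓ + α i) ν)
    (h : p.2 < ℓ) : p ∈ shapeCells d (fun _ => ℓ) ν :=
  mem_shapeCells.2 ⟨(mem_shapeCells.1 hp).1, h⟩

theorem mem_of_mem_left (hνℓ : ∀ i, ν i ≤ ℓ) {p : Fin d × ℕ} (hp : p ∈ shapeCells d α 0) :
    (p.1, p.2 + ℓ) ∈ shapeCells d (fun i => ℓ + α i) ν := by
  have := mem_shapeCells.1 hp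
  have := hνℓ p.1
  simp only [mem_shapeCells, Pi.zero_apply] at *
  omega

theorem mem_of_mem_right {p : Fin d × ℕ} (hp : p ∈ shapeCells d (fun _ => ℓ) ν) :
    p ∈ shapeCells d (fun i => ℓ + α i) ν := by
  have := mem_shapeCells.1 hp
  simp only [mem_shapeCells] at *
  omega

def splitCells (hνℓ : ∀ i, ν i ≤ ℓ) :
    shapeCells d (fun i => ℓ + α i) ν ≃ shapeCells d α 0 ⊕ shapeCells d (fun _ => ℓ) ν where
  toFun c := if h : ℓ ≤ c.1.2 then .inl ⟨_, mem_split_left c.2 h⟩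
    else .inr ⟨_, mem_split_right c.2 (not_le.1 h)⟩
  invFun := Sum.elim (fun a => ⟨_, mem_of_mem_left hνℓ a.2⟩) fun b => ⟨_, mem_of_mem_right b.2⟩
  left_inv c := by
    by_cases h : ℓ ≤ c.1.2
    · simp only [dif_pos h, Sum.elim_inl]
      exact Subtype.ext (Prod.ext rfl (Nat.sub_add_cancel h))
    · simp only [dif_neg h, Sum.elim_inr]
  right_inv s := by
    rcases s with a | b
    · simp only [Sum.elim_inl, le_add_iff_nonneg_left, zero_le, dif_pos, Nat.add_sub_cancel]
    · exact dif_neg (not_le.2 (mem_shapeCells.1 b.2).2)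

theorem IsSSYT.comp_shift {lam mu lam' mu' : Fin d → ℕ} {T : shapeCells d lam mu → Fin d}
    (hT : IsSSYT d lam mu T) (s : ℕ) (g : shapeCells d lam' mu' → shapeCells d lam mu)
    (hg : ∀ c, (g c).1 = (c.1.1, c.1.2 + s)) : IsSSYT d lam' mu' (T ∘ g) :=
  ⟨fun c c' hrow hcol => hT.1 _ _ (by simp [hg, hrow]) (by simp [hg, hcol]),
    fun c c' hrow hcol => hT.2 _ _ (by simp [hg, hrow]) (by simp [hg, hcol])⟩

theorem isSSYT_of_isSSYT_splitCells (hα : Antitone α) (hν : Antitone ν) (hνℓ : ∀ i, ν i ≤ ℓ)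
    {T : shapeCells d (fun i => ℓ + α i) ν → Fin d}
    (hl : IsSSYT d α 0 (T ∘ (splitCells hνℓ).symm ∘ Sum.inl))
    (hr : IsSSYT d (fun _ => ℓ) ν (T ∘ (splitCells hνℓ).symm ∘ Sum.inr)) :
    IsSSYT d (fun i => ℓ + α i) ν T := by
  have hTl : ∀ c (h : ℓ ≤ c.1.2),
      T c = (T ∘ (splitCells hνℓ).symm ∘ Sum.inl) ⟨_, mem_split_left c.2 h⟩ := fun c h =>
    congrArg T (Subtype.ext (Prod.ext rfl (Nat.sub_add_cancel h).symm))
  have hTr : ∀ c (h : c.1.2 < ℓ),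
      T c = (T ∘ (splitCells hνℓ).symm ∘ Sum.inr) ⟨_, mem_split_right c.2 h⟩ := fun _ _ => rfl
  refine ⟨fun c c' hrow hcol => ?_, fun c c' hrow hcol => ?_⟩
  · by_cases hc' : ℓ ≤ c'.1.2
    · by_cases hc : ℓ ≤ c.1.2
      · rw [hTl c hc, hTl c' hc']
        exact hl.1 _ _ hrow (Nat.sub_le_sub_right hcol ℓ)
      · rw [hTr c (not_le.1 hc), hTl c' hc', Fin.le_def]
        have h1 := hr.apply_le_row hν ⟨_, mem_split_right c.2 (not_le.1 hc)⟩
        have h2 := hl.row_le_apply hα ⟨_, mem_split_left c'.2 hc'⟩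
        dsimp only at h1 h2
        rw [hrow] at h1
        omega
    · rw [hTr c (by omega), hTr c' (not_le.1 hc')]
      exact hr.1 _ _ hrow hcol
  · by_cases hc : ℓ ≤ c.1.2
    · rw [hTl c hc, hTl c' (hcol ▸ hc)]
      exact hl.2 _ _ hrow (congrArg (· - ℓ) hcol)
    · rw [hTr c (not_le.1 hc), hTr c' (hcol ▸ not_le.1 hc)]
      exact hr.2 _ _ hrow hcol

theorem skewSchur_const_add_eq_mul (hα : Antitone α) (hν : Antitone ν) (hνℓ : ∀ i, ν i ≤ ℓ) :
    skewSchur d (fun i => ℓ + α i) ν = skewSchur d α 0 * skewSchur d (fun _ => ℓ) ν := by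
  set e := splitCells (α := α) hνℓ
  unfold skewSchur
  rw [sum_mul_sum, ← sum_product']
  refine sum_equiv ((e.arrowCongr (Equiv.refl _)).trans (Equiv.sumArrowEquivProdArrow _ _ _))
    (fun T => ?_) fun T _ => ?_
  · simp only [mem_filter, mem_univ, true_and, mem_product]
    exact ⟨fun hT => ⟨hT.comp_shift ℓ _ fun _ => rfl, hT.comp_shift 0 _ fun _ => rfl⟩,
      fun h => isSSYT_of_isSSYT_splitCells hα hν hνℓ h.1 h.2⟩
  · rw [Fintype.prod_equiv e _ (fun s => X (T (e.symm s))) fun c => by simp,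
      Fintype.prod_sum_type]
    rfl

end Split

theorem stmt3 (d ℓ : ℕ) (α β : Fin d → ℕ) (hα : Antitone α) (hβ : Antitone β)
    (hβℓ : ∀ i, β i ≤ ℓ) :
    skewSchur d α 0 * skewSchur d β 0
      = skewSchur d (fun i => ℓ + α i)
          (fun i => ℓ - β ⟨d - 1 - (i : ℕ), by have := i.isLt; omega⟩) := by
  have hν : Antitone fun i : Fin d => ℓ - β i.rev :=
    fun i j hij => Nat.sub_le_sub_left (hβ (Fin.rev_le_rev.2 hij)) ℓ
  have hrot := skewSchur_rotate (mu := 0) hβℓ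
  simp only [Pi.zero_apply, tsub_zero] at hrot
  have hsymm : rename Fin.rev (skewSchur d β 0) = skewSchur d β 0 :=
    skewSchur_isSymmetric hβ (fun _ _ _ => le_rfl) (fun i => Nat.zero_le (β i)) Fin.revPerm
  calc skewSchur d α 0 * skewSchur d β 0
      = skewSchur d α 0 * skewSchur d (fun _ => ℓ) fun i => ℓ - β i.rev := by rw [hrot, hsymm]
    _ = skewSchur d (fun i => ℓ + α i) fun i => ℓ - β i.rev :=
      (skewSchur_const_add_eq_mul hα hν fun _ => Nat.sub_le _ _).symm
    _ = _ := by
      congr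
      funext i
      congr 2
      ext
      simp only [Fin.val_rev]
      omega
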